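/- The surface S over F_4 defined by f = X_0³ + X_1³ + X_2²X_3 is Frobenius classical: with q = 4, the polynomial h = X_0⁶ + X_1⁶ + X_2²X_3⁴ satisfies h = f² + X_2²X_3²(X_3² - X_2²), and f does not divide h. -/

import Mathlib

open MvPolynomial

/-!
In characteristic 2 squaring is additive, so `f² = X₀⁶ + X₁⁶ + X₂⁴X₃²`, which gives the
identity for `h`. Hence `f ∣ h` would force `f ∣ X₂²X₃²(X₃² - X₂²)`. Specialising
`X₀ ↦ T, X₁ ↦ 0, X₂ ↦ 1, X₃ ↦ x` with `x ∈ F₄ \ {0, 1}` turns this into the cubic `T³ + x` dividing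
the nonzero constant `x²(x² - 1)`, which is absurd.
-/

lemma exists_ne_zero_ne_one_of_two_lt_card {K : Type*} [Zero K] [One K] [Finite K]
    (hK : 2 < Nat.card K) : ∃ x : K, x ≠ 0 ∧ x ≠ 1 := by
  have := Fintype.ofFinite K
  classical
  obtain ⟨x, -, hx⟩ := Finset.exists_mem_notMem_of_card_lt_card (s := ({0, 1} : Finset K))
    (t := .univ)
    (Finset.card_le_two.trans_lt (by rwa [Finset.card_univ, ← Nat.card_eq_fintype_card]))
  simp only [Finset.mem_insert, Finset.mem_singleton, not_or] at hx
  exact ⟨x, hx⟩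

lemma Polynomial.not_dvd_C_of_natDegree_pos {K : Type*} [Semiring K] [NoZeroDivisors K]
    {p : Polynomial K} {b : K} (hp : 0 < p.natDegree) (hb : b ≠ 0) : ¬ p ∣ Polynomial.C b := by
  intro hdvd
  have := Polynomial.natDegree_le_of_dvd hdvd (by rwa [Ne, Polynomial.C_eq_zero])
  rw [Polynomial.natDegree_C] at this
  omega

lemma not_dvd_X_sq_mul_X_sq_mul_sub {K : Type*} [CommRing K] [IsDomain K] {x : K} (hx0 : x ≠ 0)
    (hx1 : x ^ 2 ≠ 1) :
    ¬ (X 0 ^ 3 + X 1 ^ 3 + X 2 ^ 2 * X 3 : MvPolynomial (Fin 4) K) ∣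
      X 2 ^ 2 * X 3 ^ 2 * (X 3 ^ 2 - X 2 ^ 2) := fun hdvd => by
  have hspec := map_dvd (aeval ![Polynomial.X, 0, 1, Polynomial.C x]) hdvd
  refine Polynomial.not_dvd_C_of_natDegree_pos (p := Polynomial.X ^ 3 + Polynomial.C x)
    (by rw [Polynomial.natDegree_X_pow_add_C]; norm_num)
    (mul_ne_zero (pow_ne_zero 2 hx0) (sub_ne_zero.mpr hx1)) ?_
  simpa using hspec

section CharTwo

variable {R : Type*} [CommRing R] [CharP R 2]

lemma sum_X_pow_four_mul_pderiv :
    (X 0 ^ 6 + X 1 ^ 6 + X 2 ^ 2 * X 3 ^ 4 : MvPolynomial (Fin 4) R) =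
      ∑ i : Fin 4, X i ^ 4 * pderiv i (X 0 ^ 3 + X 1 ^ 3 + X 2 ^ 2 * X 3) := by
  simp only [Fin.sum_univ_four, map_add, Derivation.leibniz, Derivation.leibniz_pow, pderiv_X,
    Pi.single_apply, Fin.reduceEq, if_true, if_false, smul_eq_mul, nsmul_eq_mul, mul_one, mul_zero,
    add_zero, zero_add]
  linear_combination (-(X 0 ^ 6 + X 1 ^ 6 + X 2 ^ 5 * X 3)) *
    CharTwo.two_eq_zero (R := MvPolynomial (Fin 4) R)

lemma X_pow_six_add_eq_sq_add :
    (X 0 ^ 6 + X 1 ^ 6 + X 2 ^ 2 * X 3 ^ 4 : MvPolynomial (Fin 4) R) =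
      (X 0 ^ 3 + X 1 ^ 3 + X 2 ^ 2 * X 3) ^ 2 + X 2 ^ 2 * X 3 ^ 2 * (X 3 ^ 2 - X 2 ^ 2) := by
  simp only [CharTwo.add_sq]
  ring

end CharTwo

/-- The surface over `F₄` defined by `f = X₀³ + X₁³ + X₂²X₃` is Frobenius classical:
with `q = 4`, the polynomial `h = ∑ Xᵢ⁴ fᵢ = X₀⁶ + X₁⁶ + X₂²X₃⁴` satisfies
`h = f² + X₂²X₃²(X₃² - X₂²)`, and `f` does not divide `h`. -/
theorem stmt18 :
    letI F4 := GaloisField 2 2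
    letI f : MvPolynomial (Fin 4) F4 := X 0 ^ 3 + X 1 ^ 3 + X 2 ^ 2 * X 3
    letI h : MvPolynomial (Fin 4) F4 := X 0 ^ 6 + X 1 ^ 6 + X 2 ^ 2 * X 3 ^ 4
    h = ∑ i : Fin 4, X i ^ 4 * pderiv i f ∧
      h = f ^ 2 + X 2 ^ 2 * X 3 ^ 2 * (X 3 ^ 2 - X 2 ^ 2) ∧
      ¬ f ∣ h := by
  refine ⟨sum_X_pow_four_mul_pderiv, X_pow_six_add_eq_sq_add, fun hdvd => ?_⟩
  obtain ⟨x, hx0, hx1⟩ : ∃ x : GaloisField 2 2, x ≠ 0 ∧ x ≠ 1 :=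
    exists_ne_zero_ne_one_of_two_lt_card (by rw [GaloisField.card 2 2 two_ne_zero]; norm_num)
  refine not_dvd_X_sq_mul_X_sq_mul_sub hx0 (by rwa [← one_pow 2, Ne, CharTwo.sq_inj]) ?_
  rwa [← dvd_add_right (dvd_pow_self _ two_ne_zero), ← X_pow_six_add_eq_sq_add]
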